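/- arXiv:2301.08001 — 2 statements merged into one kernel-verified Lean document; each statement's English description precedes it below -/
import Mathlib

section
/- For every function u in H^1(ℝ) and every real q ≥ 2, the Gagliardo–Nirenberg inequality holds: ‖u‖_{L^q(ℝ)}^q ≤ 2^{q/2 − 1} · ‖u‖_{L^2(ℝ)}^{q/2 + 1} · ‖u'‖_{L^2(ℝ)}^{q/2 − 1}. -/
open MeasureTheory ENNReal

/-!
Since `(u²)' = 2uu'` is integrable and `u²` is integrable, `u²` vanishes at `-∞` and
`u(x)² = ∫_{-∞}^x 2uu' ≤ 2‖u‖₂‖u'‖₂` by Cauchy–Schwarz. Splitting `|u|^q = |u|^(q-2) |u|²` and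
bounding the first factor by this sup bound gives the inequality.
-/

theorem eLpNorm_ofReal_rpow_eq_lintegral {α ε : Type*} [MeasurableSpace α] [ENorm ε]
    {μ : Measure α} {f : α → ε} {p : ℝ} (hp : 0 < p) :
    eLpNorm f (ENNReal.ofReal p) μ ^ p = ∫⁻ x, ‖f x‖ₑ ^ p ∂μ := by
  rw [eLpNorm_eq_lintegral_rpow_enorm_toReal (by simpa using hp) ofReal_ne_top,
    toReal_ofReal hp.le, ← rpow_mul, one_div, inv_mul_cancel₀ hp.ne', rpow_one]

theorem eLpNorm_rpow_le_mul_eLpNorm_rpow_of_ae_enorm_le {α ε : Type*} [MeasurableSpace α]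
    [TopologicalSpace ε] [ContinuousENorm ε] {μ : Measure α} {f : α → ε} {C : ℝ≥0∞}
    (hf : AEStronglyMeasurable f μ) (hC : ∀ᵐ x ∂μ, ‖f x‖ₑ ≤ C) {p q : ℝ} (hp : 0 < p)
    (hpq : p ≤ q) :
    eLpNorm f (ENNReal.ofReal q) μ ^ q ≤ C ^ (q - p) * eLpNorm f (ENNReal.ofReal p) μ ^ p := by
  rw [eLpNorm_ofReal_rpow_eq_lintegral hp, eLpNorm_ofReal_rpow_eq_lintegral (hp.trans_le hpq),
    ← lintegral_const_mul'' _ (hf.enorm.pow_const p)]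
  refine lintegral_mono_ae (hC.mono fun x hx => ?_)
  calc ‖f x‖ₑ ^ q = ‖f x‖ₑ ^ (q - p) * ‖f x‖ₑ ^ p := by
        rw [← rpow_add_of_nonneg _ _ (sub_nonneg.2 hpq) hp.le, sub_add_cancel]
    _ ≤ C ^ (q - p) * ‖f x‖ₑ ^ p := by gcongr

theorem sq_le_two_mul_integral_abs_mul_deriv {u u' : ℝ → ℝ}
    (hderiv : ∀ x, HasDerivAt u (u' x) x) (hu : Integrable (fun x => u x ^ 2))
    (huu' : Integrable (fun x => u x * u' x)) (x : ℝ) :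
    u x ^ 2 ≤ 2 * ∫ t, |u t * u' t| := by
  have hderiv_sq : ∀ t, HasDerivAt (fun s => u s ^ 2) (2 * (u t * u' t)) t := fun t => by
    simpa [mul_assoc] using (hderiv t).fun_pow 2
  have hint := huu'.const_mul 2
  have hlim : Filter.Tendsto (fun t => u t ^ 2) Filter.atBot (nhds 0) :=
    tendsto_zero_of_hasDerivAt_of_integrableOn_Iic (a := 0) (fun t _ => hderiv_sq t)
      hint.integrableOn hu.integrableOn
  calc u x ^ 2 = ∫ t in Set.Iic x, 2 * (u t * u' t) := by
        rw [integral_Iic_of_hasDerivAt_of_tendsto' (fun t _ => hderiv_sq t) hint.integrableOn hlim,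
          sub_zero]
    _ ≤ ∫ t in Set.Iic x, ‖2 * (u t * u' t)‖ :=
        (Real.le_norm_self _).trans (norm_integral_le_integral_norm _)
    _ ≤ ∫ t, ‖2 * (u t * u' t)‖ :=
        setIntegral_le_integral hint.norm (.of_forall fun _ => norm_nonneg _)
    _ = 2 * ∫ t, |u t * u' t| := by simp [integral_const_mul]

theorem enorm_sq_le_two_mul_eLpNorm_mul_eLpNorm_deriv {u u' : ℝ → ℝ}
    (hderiv : ∀ x, HasDerivAt u (u' x) x) (hu : MemLp u 2 volume) (hu' : MemLp u' 2 volume)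
    (x : ℝ) : ‖u x‖ₑ ^ 2 ≤ 2 * eLpNorm u 2 volume * eLpNorm u' 2 volume := by
  have huu' : Integrable (u * u') := hu.integrable_mul hu'
  have hholder : eLpNorm (u * u') 1 volume ≤ eLpNorm u 2 volume * eLpNorm u' 2 volume := by
    rw [← smul_eq_mul]
    exact eLpNorm_smul_le_mul_eLpNorm hu'.1 hu.1
  calc ‖u x‖ₑ ^ 2 = ENNReal.ofReal (u x ^ 2) := by
        rw [← ofReal_norm, ← ofReal_pow (norm_nonneg _), Real.norm_eq_abs, sq_abs]
    _ ≤ ENNReal.ofReal (2 * ∫ t, ‖(u * u') t‖) :=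
        ofReal_le_ofReal (sq_le_two_mul_integral_abs_mul_deriv hderiv hu.integrable_sq huu' x)
    _ = 2 * eLpNorm (u * u') 1 volume := by
        rw [ofReal_mul zero_le_two, ofReal_integral_norm_eq_lintegral_enorm huu',
          eLpNorm_one_eq_lintegral_enorm, ofReal_ofNat]
    _ ≤ 2 * eLpNorm u 2 volume * eLpNorm u' 2 volume := by
        rw [mul_assoc]; gcongr

/-- Gagliardo–Nirenberg inequality on the line: for `u ∈ H¹(ℝ)` (with derivative `u'`)
and every `q ≥ 2`, `‖u‖_q^q ≤ 2^(q/2-1) ‖u‖_2^(q/2+1) ‖u'‖_2^(q/2-1)`. -/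
theorem gagliardo_nirenberg
    (u u' : ℝ → ℝ) (hderiv : ∀ x, HasDerivAt u (u' x) x)
    (hu : MemLp u 2 volume) (hu' : MemLp u' 2 volume)
    (q : ℝ) (hq : 2 ≤ q) :
    eLpNorm u (ENNReal.ofReal q) volume ^ q ≤
      (2 : ℝ≥0∞) ^ (q / 2 - 1) * eLpNorm u 2 volume ^ (q / 2 + 1) *
        eLpNorm u' 2 volume ^ (q / 2 - 1) := by
  set A := eLpNorm u 2 volume
  set B := eLpNorm u' 2 volume
  have hsup (x : ℝ) : ‖u x‖ₑ ≤ (2 * A * B) ^ (2⁻¹ : ℝ) := by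
    rw [le_rpow_inv_iff two_pos, rpow_two]
    exact enorm_sq_le_two_mul_eLpNorm_mul_eLpNorm_deriv hderiv hu hu' x
  have hexp : 0 ≤ q / 2 - 1 := by linarith
  calc eLpNorm u (ENNReal.ofReal q) volume ^ q
      ≤ ((2 * A * B) ^ (2⁻¹ : ℝ)) ^ (q - 2) * eLpNorm u (ENNReal.ofReal 2) volume ^ (2 : ℝ) :=
        eLpNorm_rpow_le_mul_eLpNorm_rpow_of_ae_enorm_le hu.1 (.of_forall hsup) two_pos hq
    _ = (2 * A * B) ^ (q / 2 - 1) * A ^ (2 : ℝ) := by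
        rw [← rpow_mul, ofReal_ofNat]
        congr 2
        ring
    _ = 2 ^ (q / 2 - 1) * A ^ (q / 2 + 1) * B ^ (q / 2 - 1) := by
        rw [mul_rpow_of_nonneg _ _ hexp, mul_rpow_of_nonneg _ _ hexp,
          show q / 2 + 1 = (q / 2 - 1) + 2 by ring, rpow_add_of_nonneg _ _ hexp zero_le_two]
        ring
end

section
/- Let p > 2, λ > 0 and let (a_n), (b_n), (c_n) be sequences of nonnegative reals (representing ‖u_n − u‖_p^p, ‖u_n' − u'‖_2^2, ‖u_n − u‖_2^2 respectively) with c_n > 0, and suppose by Brezis–Lieb splitting that a_n = A_n − A + o(1), b_n = B_n − B + o(1), c_n = C_n − C + o(1), where A_n − B_n = λ C_n for all n (Nehari condition for u_n), A − B = ℓ·C with ℓ < λ and C > 0, and C_n → μ. If the quantity (a_n − b_n)/c_n is bounded above, then necessarily μ > C, and lim_n (a_n − b_n)/c_n = λ + (C/(μ − C))·(λ − ℓ). -/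
/-!
The Brezis–Lieb splittings together with the Nehari identity give
`a n - b n → λ μ - ℓ C` and `c n → μ - C`. If `μ = C`, the numerator tends to
`(λ - ℓ) C > 0` while the positive denominator tends to `0`, so the quotient is
unbounded; hence `μ > C`, and the limit of the quotient is `(λ μ - ℓ C) / (μ - C)`.
-/

open Filter Topology

theorem Filter.Tendsto.div_atTop_of_tendsto_nhdsGT_zero {α : Type*} {l : Filter α}
    {f g : α → ℝ} {N : ℝ} (hf : Tendsto f l (𝓝 N)) (hN : 0 < N)
    (hg : Tendsto g l (𝓝[>] 0)) : Tendsto (fun x => f x / g x) l atTop := by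
  simpa only [div_eq_mul_inv, Function.comp_def] using
    hf.pos_mul_atTop hN (tendsto_inv_nhdsGT_zero.comp hg)

theorem not_bddAbove_div_of_tendsto_zero {α : Type*} {l : Filter α} [l.NeBot]
    {f g : α → ℝ} {N : ℝ} (hf : Tendsto f l (𝓝 N)) (hN : 0 < N) (hg : Tendsto g l (𝓝 0))
    (hg_pos : ∀ x, 0 < g x) : ¬ ∃ M, ∀ x, f x / g x ≤ M := by
  rintro ⟨M, hM⟩
  have hg' : Tendsto g l (𝓝[>] 0) :=
    tendsto_nhdsWithin_of_tendsto_nhds_of_eventually_within _ hg (.of_forall hg_pos)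
  obtain ⟨x, hx⟩ := ((hf.div_atTop_of_tendsto_nhdsGT_zero hN hg').eventually_gt_atTop M).exists
  exact (hM x).not_gt hx

theorem brezis_lieb_quotient_limit_general
    (lam l mu A B C : ℝ)
    (a b c A' B' C' : ℕ → ℝ)
    (hc0 : ∀ n, 0 < c n)
    (hBLa : Tendsto (fun n => a n - (A' n - A)) atTop (nhds 0))
    (hBLb : Tendsto (fun n => b n - (B' n - B)) atTop (nhds 0))
    (hBLc : Tendsto (fun n => c n - (C' n - C)) atTop (nhds 0))
    (hNeh : ∀ n, A' n - B' n = lam * C' n)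
    (hABC : A - B = l * C) (hl : l < lam) (hCpos : 0 < C)
    (hCn : Tendsto C' atTop (nhds mu))
    (hbdd : ∃ M : ℝ, ∀ n, (a n - b n) / c n ≤ M) :
    C < mu ∧
      Tendsto (fun n => (a n - b n) / c n) atTop
        (nhds (lam + (C / (mu - C)) * (lam - l))) := by
  have hnum : Tendsto (fun n => a n - b n) atTop (𝓝 (lam * mu - l * C)) := by
    have h := (hBLa.sub hBLb).add ((hCn.const_mul lam).sub_const (l * C))
    rw [sub_zero, zero_add] at h
    refine h.congr fun n => ?_
    linear_combination hABC - hNeh n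
  have hden : Tendsto c atTop (𝓝 (mu - C)) := by
    have h := hBLc.add (hCn.sub_const C)
    rw [zero_add] at h
    exact h.congr fun n => by ring
  have hle : C ≤ mu :=
    sub_nonneg.mp (ge_of_tendsto' hden fun n => (hc0 n).le)
  have hlt : C < mu := by
    refine hle.lt_of_ne fun hEq => ?_
    subst hEq
    rw [sub_self] at hden
    refine not_bddAbove_div_of_tendsto_zero hnum ?_ hden hc0 hbdd
    nlinarith
  refine ⟨hlt, ?_⟩
  have hne : mu - C ≠ 0 := sub_ne_zero.mpr hlt.ne'
  have hlim : lam + C / (mu - C) * (lam - l) = (lam * mu - l * C) / (mu - C) := by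
    field_simp
    ring
  rw [hlim]
  exact hnum.div hden hne

/-- Algebraic core of the Brezis–Lieb splitting argument: with
`a_n = A_n - A + o(1)`, `b_n = B_n - B + o(1)`, `c_n = C_n - C + o(1)`,
`A_n - B_n = λ C_n`, `A - B = ℓ C` with `ℓ < λ`, `C > 0`, `C_n → μ`, and
`(a_n - b_n)/c_n` bounded above, one gets `μ > C` and
`(a_n - b_n)/c_n → λ + (C/(μ - C))(λ - ℓ)`. -/
theorem brezis_lieb_quotient_limit
    (p lam l mu A B C : ℝ) (hp : 2 < p) (hlam : 0 < lam)
    (a b c A' B' C' : ℕ → ℝ)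
    (ha0 : ∀ n, 0 ≤ a n) (hb0 : ∀ n, 0 ≤ b n) (hc0 : ∀ n, 0 < c n)
    (hBLa : Tendsto (fun n => a n - (A' n - A)) atTop (nhds 0))
    (hBLb : Tendsto (fun n => b n - (B' n - B)) atTop (nhds 0))
    (hBLc : Tendsto (fun n => c n - (C' n - C)) atTop (nhds 0))
    (hNeh : ∀ n, A' n - B' n = lam * C' n)
    (hABC : A - B = l * C) (hl : l < lam) (hCpos : 0 < C)
    (hCn : Tendsto C' atTop (nhds mu))
    (hbdd : ∃ M : ℝ, ∀ n, (a n - b n) / c n ≤ M) :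
    C < mu ∧
      Tendsto (fun n => (a n - b n) / c n) atTop
        (nhds (lam + (C / (mu - C)) * (lam - l))) :=
  brezis_lieb_quotient_limit_general lam l mu A B C a b c A' B' C' hc0 hBLa hBLb hBLc hNeh hABC hl
    hCpos hCn hbdd
end
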